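/- Let $n \ge 1$ and let $Q(\mathbf{x}) = A_1 x_1^2 + \cdots + A_n x_n^2$ with nonzero integers $A_i$. For any $q \ge 1$ and $\mathbf{c} \in \mathbb{Z}^n$, one has $|S_q(\mathbf{c})|^2 \le \varphi(q)\, q^{n+1} \prod_{i=1}^{n} \gcd(q, 2A_i)$, where $S_q(\mathbf{c}) = \sum_{a:\gcd(a,q)=1}\sum_{\mathbf{b}\bmod q} e_q(aQ(\mathbf{b}) + \mathbf{b}\cdot\mathbf{c})$. -/

import Mathlib

open Finset

noncomputable def Sq (n : ℕ) (A : Fin n → ℤ) (q : ℕ) (c : Fin n → ℤ) : ℂ :=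
  ∑ a ∈ (Finset.Icc 1 q).filter (fun a => Nat.gcd a q = 1),
    ∑ b ∈ Fintype.piFinset (fun _ : Fin n => Finset.range q),
      Complex.exp (2 * Real.pi * Complex.I *
        ((a : ℂ) * (∑ i, (A i : ℂ) * (b i : ℂ) ^ 2) + ∑ i, (b i : ℂ) * (c i : ℂ)) / q)

noncomputable def eC (q : ℕ) (m : ℤ) : ℂ := Complex.exp (2 * Real.pi * Complex.I * m / q)

lemma eC_add (q : ℕ) (m l : ℤ) : eC q (m + l) = eC q m * eC q l := by
  rw [eC, eC, eC, ← Complex.exp_add]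
  push_cast
  ring_nf

lemma eC_norm (q : ℕ) (m : ℤ) : ‖eC q m‖ = 1 := by
  rw [eC]
  have : (2 * Real.pi * Complex.I * m / q) = ((2 * Real.pi * m / q : ℝ) : ℂ) * Complex.I := by
    push_cast; ring
  rw [this]
  exact Complex.norm_exp_ofReal_mul_I _

lemma eC_one (q : ℕ) (hq : q ≠ 0) (m : ℤ) (h : (q : ℤ) ∣ m) : eC q m = 1 := by
  obtain ⟨t, rfl⟩ := h
  rw [eC]
  have hq' : (q : ℂ) ≠ 0 := by exact_mod_cast hq
  have : (2 * Real.pi * Complex.I * ((q : ℤ) * t : ℤ) / q) = (t : ℂ) * (2 * Real.pi * Complex.I) := by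
    push_cast; field_simp
  rw [this, Complex.exp_int_mul_two_pi_mul_I]

lemma eC_conj (q : ℕ) (m : ℤ) : (starRingEnd ℂ) (eC q m) = eC q (-m) := by
  rw [eC, eC, ← Complex.exp_conj]
  congr 1
  simp [map_div₀, Complex.conj_I, map_ofNat]

lemma eC_congr (q : ℕ) (hq : q ≠ 0) {m l : ℤ} (h : m ≡ l [ZMOD q]) : eC q m = eC q l := by
  have hd : (q : ℤ) ∣ l - m := Int.ModEq.dvd h
  have : eC q l = eC q (m + (l - m)) := by ring_nf
  rw [this, eC_add, eC_one q hq _ hd, mul_one]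

lemma eC_pow (q : ℕ) (k : ℤ) (d : ℕ) : eC q (k * d) = eC q k ^ d := by
  rw [eC, eC, ← Complex.exp_nat_mul]
  congr 1
  push_cast
  ring

lemma eC_sum (q : ℕ) (hq : q ≠ 0) (k : ℤ) :
    ∑ d ∈ range q, eC q (k * d) = if (q : ℤ) ∣ k then (q : ℂ) else 0 := by
  simp only [eC_pow]
  by_cases h : (q : ℤ) ∣ k
  · simp [eC_one q hq k h, h]
  · rw [if_neg h]
    have hz : eC q k ≠ 1 := by
      intro hc
      apply h
      rw [eC, Complex.exp_eq_one_iff] at hc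
      obtain ⟨t, ht⟩ := hc
      have hq' : (q : ℂ) ≠ 0 := by exact_mod_cast hq
      have h2 : (2 * (Real.pi : ℂ) * Complex.I) ≠ 0 := by
        simp [Real.pi_ne_zero, Complex.I_ne_zero]
      have : (k : ℂ) = (t : ℂ) * q := by
        field_simp at ht
        have h3 : (2 * (Real.pi : ℂ) * Complex.I) * k = (2 * (Real.pi : ℂ) * Complex.I) * ((t : ℂ) * q) := by
          linear_combination (2 * (Real.pi : ℂ) * Complex.I) * ht
        exact mul_left_cancel₀ h2 h3
      have : (k : ℤ) = t * q := by exact_mod_cast this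
      exact ⟨t, by linarith⟩
    rw [geom_sum_eq hz]
    have hpow : eC q k ^ q = 1 := by
      rw [← eC_pow, mul_comm]
      exact eC_one q hq _ ⟨k, rfl⟩
    rw [hpow]
    simp

lemma count_mult (q m : ℕ) (hm : m ∣ q) (hm0 : m ≠ 0) :
    ((range q).filter (fun x => m ∣ x)).card = q / m := by
  have : (range q).filter (fun x => m ∣ x) = (range (q / m)).image (fun j => m * j) := by
    ext x
    simp only [mem_filter, mem_range, mem_image]
    constructor
    · rintro ⟨hx, j, rfl⟩
      exact ⟨j, by rw [Nat.lt_div_iff_mul_lt' hm]; exact hx, rfl⟩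
    · rintro ⟨j, hj, rfl⟩
      rw [Nat.lt_div_iff_mul_lt' hm] at hj
      exact ⟨hj, j, rfl⟩
  rw [this, Finset.card_image_of_injective _
    (fun a b h => Nat.eq_of_mul_eq_mul_left (Nat.pos_of_ne_zero hm0) h), Finset.card_range]

lemma dvd_mul_iff (q : ℕ) (hq : q ≠ 0) (k t : ℤ) :
    (q : ℤ) ∣ k * t ↔ ((q : ℤ) / Int.gcd (q : ℤ) k) ∣ t := by
  have hg0 : 0 < Int.gcd (q : ℤ) k := Int.gcd_pos_of_ne_zero_left _ (by exact_mod_cast hq)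
  have hgne : ((Int.gcd (q : ℤ) k : ℤ)) ≠ 0 := by exact_mod_cast hg0.ne'
  have hco := Int.gcd_div_gcd_div_gcd (i := (q : ℤ)) (j := k) hg0
  have hq' : (q : ℤ) = (Int.gcd (q : ℤ) k : ℤ) * ((q : ℤ) / Int.gcd (q : ℤ) k) :=
    (Int.mul_ediv_cancel' (Int.gcd_dvd_left _ _)).symm
  have hk' : k = (Int.gcd (q : ℤ) k : ℤ) * (k / Int.gcd (q : ℤ) k) :=
    (Int.mul_ediv_cancel' (Int.gcd_dvd_right _ _)).symm
  constructor
  · intro h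
    have h2 : (Int.gcd (q : ℤ) k : ℤ) * ((q : ℤ) / Int.gcd (q : ℤ) k) ∣
        (Int.gcd (q : ℤ) k : ℤ) * ((k / Int.gcd (q : ℤ) k) * t) := by
      rw [← mul_assoc, ← hk', ← hq']
      exact h
    have h3 := (mul_dvd_mul_iff_left hgne).mp h2
    exact Int.dvd_of_dvd_mul_right_of_gcd_one h3 hco
  · intro h
    calc (q : ℤ) = (Int.gcd (q : ℤ) k : ℤ) * ((q : ℤ) / Int.gcd (q : ℤ) k) := hq'
      _ ∣ (Int.gcd (q : ℤ) k : ℤ) * ((k / Int.gcd (q : ℤ) k) * t) :=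
          mul_dvd_mul_left _ (Dvd.dvd.mul_left h _)
      _ = k * t := by rw [← mul_assoc, ← hk']

lemma count_sol (q : ℕ) (hq : q ≠ 0) (k : ℤ) :
    ((range q).filter (fun f : ℕ => (q : ℤ) ∣ k * (f : ℤ))).card = Int.gcd (q : ℤ) k := by
  have hgd : Int.gcd (q : ℤ) k ∣ q := by
    have := Int.gcd_dvd_left (a := (q : ℤ)) (b := k)
    exact_mod_cast this
  have hg0 : 0 < Int.gcd (q : ℤ) k := Int.gcd_pos_of_ne_zero_left _ (by exact_mod_cast hq)
  have hcast : ((q / Int.gcd (q : ℤ) k : ℕ) : ℤ) = (q : ℤ) / Int.gcd (q : ℤ) k := by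
    exact Int.natCast_div _ _
  have heq : (range q).filter (fun f : ℕ => (q : ℤ) ∣ k * (f : ℤ)) =
      (range q).filter (fun f : ℕ => (q / Int.gcd (q : ℤ) k) ∣ f) := by
    apply Finset.filter_congr
    intro f _
    rw [dvd_mul_iff q hq k f, ← hcast, Int.natCast_dvd_natCast]
  have hne : q / Int.gcd (q : ℤ) k ≠ 0 :=
    (Nat.div_pos (Nat.le_of_dvd (Nat.pos_of_ne_zero hq) hgd) hg0).ne'
  rw [heq, count_mult q _ (Nat.div_dvd_of_dvd hgd) hne]
  exact Nat.div_div_self hgd hq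

lemma zmod_sum {M : Type*} [AddCommMonoid M] (q : ℕ) [NeZero q] (F : ZMod q → M) :
    ∑ x : ZMod q, F x = ∑ b ∈ range q, F (b : ZMod q) := by
  refine Finset.sum_nbij' (i := fun x : ZMod q => x.val) (j := fun b : ℕ => (b : ZMod q))
    ?_ ?_ ?_ ?_ ?_
  · intro x _; exact mem_range.mpr (ZMod.val_lt x)
  · intro b _; exact mem_univ _
  · intro x _; exact ZMod.natCast_rightInverse x
  · intro b hb; exact ZMod.val_cast_of_lt (mem_range.mp hb)
  · intro x _
    exact congrArg F (ZMod.natCast_rightInverse x).symm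

lemma gauss_bound (q : ℕ) (hq : q ≠ 0) (a : ℕ) (ha : Nat.gcd a q = 1) (A cc : ℤ) :
    ‖∑ b ∈ range q, eC q ((a : ℤ) * A * (b : ℤ) ^ 2 + (b : ℤ) * cc)‖ ^ 2
      ≤ (q : ℝ) * (Int.gcd (q : ℤ) (2 * A)) := by
  haveI : NeZero q := ⟨hq⟩
  set M : ℤ → ℤ := fun t => (a : ℤ) * A * t ^ 2 + t * cc with hM
  set S : ℂ := ∑ b ∈ range q, eC q (M b) with hS
  have hMc : ∀ u v : ℤ, u ≡ v [ZMOD (q : ℤ)] → eC q (M u) = eC q (M v) := by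
    intro u v h
    exact eC_congr q hq (((h.pow 2).mul_left ((a : ℤ) * A)).add (h.mul_right cc))
  set F : ZMod q → ℂ := fun x => eC q (M x.val) with hF
  have hSz : S = ∑ x : ZMod q, F x := by
    rw [zmod_sum q F, hS]
    apply Finset.sum_congr rfl
    intro b hb
    rw [hF]
    simp only
    rw [ZMod.val_cast_of_lt (mem_range.mp hb)]
  have hsq : (‖S‖ ^ 2 : ℝ) = Complex.normSq S := by
    rw [← Complex.sq_norm]
  have hmc : ((Complex.normSq S : ℝ) : ℂ) = S * (starRingEnd ℂ) S := (Complex.mul_conj S).symm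
  have hexp : S * (starRingEnd ℂ) S =
      ∑ f : ZMod q, ∑ y : ZMod q, F (y + f) * (starRingEnd ℂ) (F y) :=
    calc S * (starRingEnd ℂ) S
        = ∑ x : ZMod q, ∑ y : ZMod q, F x * (starRingEnd ℂ) (F y) := by
          rw [hSz, map_sum, Finset.sum_mul_sum]
      _ = ∑ y : ZMod q, ∑ x : ZMod q, F x * (starRingEnd ℂ) (F y) := Finset.sum_comm
      _ = ∑ y : ZMod q, ∑ f : ZMod q, F (y + f) * (starRingEnd ℂ) (F y) := by
          apply Finset.sum_congr rfl
          intro y _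
          exact (Fintype.sum_equiv (Equiv.addLeft y)
            (fun f => F (y + f) * (starRingEnd ℂ) (F y))
            (fun x => F x * (starRingEnd ℂ) (F y)) (fun f => rfl)).symm
      _ = ∑ f : ZMod q, ∑ y : ZMod q, F (y + f) * (starRingEnd ℂ) (F y) := Finset.sum_comm
  have hinner : ∀ f : ZMod q, ∑ y : ZMod q, F (y + f) * (starRingEnd ℂ) (F y)
      = eC q ((a : ℤ) * A * (f.val : ℤ) ^ 2 + (f.val : ℤ) * cc) *
        (if (q : ℤ) ∣ 2 * (a : ℤ) * A * (f.val : ℤ) then (q : ℂ) else 0) := by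
    intro f
    have h1 : ∀ y : ZMod q, F (y + f) * (starRingEnd ℂ) (F y)
        = eC q ((2 * (a : ℤ) * A * (f.val : ℤ)) * (y.val : ℤ)) *
          eC q ((a : ℤ) * A * (f.val : ℤ) ^ 2 + (f.val : ℤ) * cc) := by
      intro y
      have hval : ((y + f).val : ℤ) ≡ (y.val : ℤ) + (f.val : ℤ) [ZMOD (q : ℤ)] := by
        rw [ZMod.val_add]
        push_cast
        show ((y.val + f.val : ℤ) % q) % q = ((y.val : ℤ) + f.val) % q
        exact Int.emod_emod_of_dvd _ dvd_rfl
      rw [hF]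
      simp only [eC_conj]
      rw [hMc _ _ hval, ← eC_add, ← eC_add]
      congr 1
      ring
    rw [Finset.sum_congr rfl (fun y _ => h1 y), ← Finset.sum_mul]
    rw [mul_comm]
    congr 1
    rw [zmod_sum q (fun y => eC q ((2 * (a : ℤ) * A * (f.val : ℤ)) * (y.val : ℤ)))]
    rw [← eC_sum q hq (2 * (a : ℤ) * A * (f.val : ℤ))]
    apply Finset.sum_congr rfl
    intro b hb
    rw [ZMod.val_cast_of_lt (mem_range.mp hb)]
  -- now the norm bound
  have key : ((Complex.normSq S : ℝ) : ℂ) = ∑ f : ZMod q,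
      eC q ((a : ℤ) * A * (f.val : ℤ) ^ 2 + (f.val : ℤ) * cc) *
        (if (q : ℤ) ∣ 2 * (a : ℤ) * A * (f.val : ℤ) then (q : ℂ) else 0) := by
    rw [hmc, hexp]
    exact Finset.sum_congr rfl (fun f _ => hinner f)
  have hbound : (Complex.normSq S : ℝ) ≤
      ∑ f : ZMod q, (if (q : ℤ) ∣ 2 * (a : ℤ) * A * (f.val : ℤ) then (q : ℝ) else 0) := by
    have h1 : (Complex.normSq S : ℝ) = ‖((Complex.normSq S : ℝ) : ℂ)‖ := by
      rw [Complex.norm_real, Real.norm_eq_abs, abs_of_nonneg (Complex.normSq_nonneg S)]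
    rw [h1, key]
    refine (norm_sum_le _ _).trans ?_
    apply Finset.sum_le_sum
    intro f _
    rw [norm_mul, eC_norm, one_mul]
    by_cases h : (q : ℤ) ∣ 2 * (a : ℤ) * A * (f.val : ℤ)
    · rw [if_pos h, if_pos h]
      simp
    · rw [if_neg h, if_neg h]
      simp
  -- condition is equivalent to q ∣ (2A) * f.val
  have hcond : ∀ v : ℤ, ((q : ℤ) ∣ 2 * (a : ℤ) * A * v) ↔ ((q : ℤ) ∣ (2 * A) * v) := by
    intro v
    have hre : 2 * (a : ℤ) * A * v = (a : ℤ) * ((2 * A) * v) := by ring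
    rw [hre]
    constructor
    · intro h
      refine Int.dvd_of_dvd_mul_right_of_gcd_one h ?_
      rw [Int.gcd_natCast_natCast, Nat.gcd_comm]
      exact ha
    · intro h
      exact h.mul_left _
  have hcount : ∑ f : ZMod q, (if (q : ℤ) ∣ 2 * (a : ℤ) * A * (f.val : ℤ) then (q : ℝ) else 0)
      = (q : ℝ) * (Int.gcd (q : ℤ) (2 * A)) := by
    rw [zmod_sum q (fun f => if (q : ℤ) ∣ 2 * (a : ℤ) * A * (f.val : ℤ) then (q : ℝ) else 0)]
    have : ∀ b ∈ range q,
        (if (q : ℤ) ∣ 2 * (a : ℤ) * A * (((b : ZMod q)).val : ℤ) then (q : ℝ) else 0)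
        = (if (q : ℤ) ∣ (2 * A) * (b : ℤ) then (q : ℝ) else 0) := by
      intro b hb
      rw [ZMod.val_cast_of_lt (mem_range.mp hb)]
      simp only [hcond]
    rw [Finset.sum_congr rfl this, Finset.sum_ite, Finset.sum_const, Finset.sum_const_zero,
      add_zero, count_sol q hq (2 * A), nsmul_eq_mul, mul_comm]
  calc ‖S‖ ^ 2 = (Complex.normSq S : ℝ) := hsq
    _ ≤ _ := hbound
    _ = _ := hcount

lemma card_coprime_le (q : ℕ) (hq : 1 ≤ q) :
    ((Icc 1 q).filter (fun a => Nat.gcd a q = 1)).card ≤ Nat.totient q := by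
  rw [Nat.totient]
  apply Finset.card_le_card_of_injOn (fun a => a % q)
  · intro a hamem
    simp only [mem_coe, mem_filter, mem_Icc] at hamem
    obtain ⟨⟨h1, h2⟩, h3⟩ := hamem
    simp only [mem_coe, mem_filter, mem_range]
    refine ⟨Nat.mod_lt a hq, ?_⟩
    show Nat.gcd q (a % q) = 1
    rw [Nat.gcd_comm, ← Nat.gcd_rec, Nat.gcd_comm]
    exact h3
  · intro x hx y hy hxy
    simp only [coe_filter, Set.mem_setOf_eq, mem_Icc] at hx hy
    obtain ⟨⟨hx1, hx2⟩, _⟩ := hx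
    obtain ⟨⟨hy1, hy2⟩, _⟩ := hy
    simp only at hxy
    rcases eq_or_lt_of_le hx2 with h | h
    · rcases eq_or_lt_of_le hy2 with h' | h'
      · rw [h, h']
      · rw [h] at hxy
        rw [Nat.mod_self, Nat.mod_eq_of_lt h'] at hxy
        omega
    · rcases eq_or_lt_of_le hy2 with h' | h'
      · rw [h'] at hxy
        rw [Nat.mod_self, Nat.mod_eq_of_lt h] at hxy
        omega
      · rwa [Nat.mod_eq_of_lt h, Nat.mod_eq_of_lt h'] at hxy

lemma Sq_factor (n : ℕ) (A : Fin n → ℤ) (q : ℕ) (c : Fin n → ℤ) :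
    Sq n A q c = ∑ a ∈ (Finset.Icc 1 q).filter (fun a => Nat.gcd a q = 1),
      ∏ i, ∑ b ∈ range q, eC q ((a : ℤ) * A i * (b : ℤ) ^ 2 + (b : ℤ) * c i) := by
  rw [Sq]
  apply Finset.sum_congr rfl
  intro a _
  rw [Finset.prod_univ_sum]
  apply Finset.sum_congr rfl
  intro b _
  simp only [eC]
  rw [← Complex.exp_sum]
  congr 1
  push_cast
  have hsplit : (∑ i : Fin n, ((a : ℂ) * (A i : ℂ) * (b i : ℂ) ^ 2 + (b i : ℂ) * (c i : ℂ)))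
      = (a : ℂ) * (∑ i, (A i : ℂ) * (b i : ℂ) ^ 2) + ∑ i, (b i : ℂ) * (c i : ℂ) := by
    rw [Finset.sum_add_distrib, Finset.mul_sum]
    congr 1
    exact Finset.sum_congr rfl fun i _ => by ring
  have h2 : ∀ i : Fin n, 2 * (Real.pi : ℂ) * Complex.I *
        ((a : ℂ) * (A i : ℂ) * (b i : ℂ) ^ 2 + (b i : ℂ) * (c i : ℂ)) / q
      = (2 * (Real.pi : ℂ) * Complex.I / q) *
        ((a : ℂ) * (A i : ℂ) * (b i : ℂ) ^ 2 + (b i : ℂ) * (c i : ℂ)) := fun i => by ring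
  rw [Finset.sum_congr rfl (fun i _ => h2 i), ← Finset.mul_sum, hsplit]
  ring

theorem Sq_sq_bound (n : ℕ) (hn : 1 ≤ n) (A : Fin n → ℤ) (hA : ∀ i, A i ≠ 0)
    (q : ℕ) (hq : 1 ≤ q) (c : Fin n → ℤ) :
    ‖Sq n A q c‖ ^ 2 ≤ (Nat.totient q : ℝ) * (q : ℝ) ^ (n + 1) *
      ∏ i, (Nat.gcd q (2 * A i).natAbs : ℝ) := by
  have hq0 : q ≠ 0 := by omega
  set K := (Finset.Icc 1 q).filter (fun a => Nat.gcd a q = 1) with hK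
  set g : Fin n → ℝ := fun i => (Nat.gcd q (2 * A i).natAbs : ℝ) with hg
  have hg1 : ∀ i, 1 ≤ g i := by
    intro i
    have h0 : Nat.gcd q (2 * A i).natAbs ≠ 0 := Nat.gcd_ne_zero_left hq0
    simp only [hg]
    exact_mod_cast Nat.one_le_iff_ne_zero.mpr h0
  have hgnn : ∀ i, 0 ≤ g i := fun i => le_trans zero_le_one (hg1 i)
  have hqnn : (0 : ℝ) ≤ (q : ℝ) := Nat.cast_nonneg q
  have hGa : ∀ a ∈ K, ∀ i : Fin n,
      ‖∑ b ∈ range q, eC q ((a : ℤ) * A i * (b : ℤ) ^ 2 + (b : ℤ) * c i)‖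
        ≤ Real.sqrt ((q : ℝ) * g i) := by
    intro a haK i
    have ha : Nat.gcd a q = 1 := (Finset.mem_filter.mp haK).2
    have hb := gauss_bound q hq0 a ha (A i) (c i)
    have hgi : (Int.gcd (q : ℤ) (2 * A i) : ℝ) = g i := by
      rw [hg]
      norm_num [Int.gcd]
    rw [hgi] at hb
    rw [Real.le_sqrt (norm_nonneg _) (mul_nonneg hqnn (hgnn i))]
    exact hb
  have hnorm : ‖Sq n A q c‖ ≤ (K.card : ℝ) * ∏ i, Real.sqrt ((q : ℝ) * g i) := by
    rw [Sq_factor]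
    refine (norm_sum_le _ _).trans ?_
    have : ∀ a ∈ K, ‖∏ i, ∑ b ∈ range q, eC q ((a : ℤ) * A i * (b : ℤ) ^ 2 + (b : ℤ) * c i)‖
        ≤ ∏ i, Real.sqrt ((q : ℝ) * g i) := by
      intro a haK
      rw [norm_prod]
      exact Finset.prod_le_prod (fun i _ => norm_nonneg _) (fun i _ => hGa a haK i)
    calc ∑ a ∈ K, ‖∏ i, ∑ b ∈ range q, eC q ((a : ℤ) * A i * (b : ℤ) ^ 2 + (b : ℤ) * c i)‖
        ≤ ∑ _a ∈ K, ∏ i, Real.sqrt ((q : ℝ) * g i) := Finset.sum_le_sum this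
      _ = (K.card : ℝ) * ∏ i, Real.sqrt ((q : ℝ) * g i) := by
          rw [Finset.sum_const, nsmul_eq_mul]
  have hPsq : (∏ i, Real.sqrt ((q : ℝ) * g i)) ^ 2 = (q : ℝ) ^ n * ∏ i, g i := by
    rw [← Finset.prod_pow]
    have : ∀ i : Fin n, Real.sqrt ((q : ℝ) * g i) ^ 2 = (q : ℝ) * g i := fun i =>
      Real.sq_sqrt (mul_nonneg hqnn (hgnn i))
    rw [Finset.prod_congr rfl (fun i _ => this i), Finset.prod_mul_distrib,
      Finset.prod_const, Finset.card_univ, Fintype.card_fin]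
  have hcard_tot : (K.card : ℝ) ≤ (Nat.totient q : ℝ) := by
    exact_mod_cast card_coprime_le q hq
  have hcard_q : (K.card : ℝ) ≤ (q : ℝ) := by
    have h1 : K.card ≤ (Finset.Icc 1 q).card := Finset.card_filter_le _ _
    have h2 : (Finset.Icc 1 q).card = q := by rw [Nat.card_Icc]; omega
    exact_mod_cast h1.trans_eq h2
  have hPnn : 0 ≤ ∏ i, Real.sqrt ((q : ℝ) * g i) :=
    Finset.prod_nonneg (fun i _ => Real.sqrt_nonneg _)
  have hcardnn : (0 : ℝ) ≤ (K.card : ℝ) := Nat.cast_nonneg _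
  calc ‖Sq n A q c‖ ^ 2
      ≤ ((K.card : ℝ) * ∏ i, Real.sqrt ((q : ℝ) * g i)) ^ 2 := by
        apply pow_le_pow_left₀ (norm_nonneg _) hnorm
    _ = (K.card : ℝ) ^ 2 * ((q : ℝ) ^ n * ∏ i, g i) := by
        rw [mul_pow, hPsq]
    _ ≤ ((Nat.totient q : ℝ) * (q : ℝ)) * ((q : ℝ) ^ n * ∏ i, g i) := by
        apply mul_le_mul_of_nonneg_right
        · rw [sq]
          exact mul_le_mul hcard_tot hcard_q hcardnn (Nat.cast_nonneg _)
        · exact mul_nonneg (pow_nonneg hqnn n) (Finset.prod_nonneg fun i _ => hgnn i)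
    _ = (Nat.totient q : ℝ) * (q : ℝ) ^ (n + 1) * ∏ i, g i := by ring
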